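/- Let q be a self-join-free Boolean conjunctive query, θ a valuation over a subset of vars(q), and F ∈ q an atom such that F attacks no variable of dom(θ) in q. Then for every variable v ∈ vars(q) \ dom(θ): F attacks v in q if and only if θ(F) attacks v in θ(q). -/

import Mathlib

open scoped Classical

/-! ## Variables, constants, relation names -/

abbrev Var : Type := ℕ
abbrev RelName : Type := ℕ

/-- A term: a variable or a constant (a non-negative rational). -/
inductive Trm : Type where
  | var : Var → Trm
  | const : ℚ≥0 → Trm
deriving DecidableEq

/-- An atom `R(x̲, y)`: relation name, primary-key arguments, remaining arguments. -/
structure DBAtom : Type where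
  rel : RelName
  keyArgs : List Trm
  nonkeyArgs : List Trm
deriving DecidableEq, Inhabited

/-- A fact: an atom without variables. -/
structure DBFact : Type where
  rel : RelName
  keyArgs : List ℚ≥0
  nonkeyArgs : List ℚ≥0
deriving DecidableEq

def Trm.var? : Trm → Option Var
  | .var v => some v
  | .const _ => none

def Trm.const? : Trm → Option ℚ≥0
  | .var _ => none
  | .const c => some c

def DBAtom.keyVars (F : DBAtom) : Finset Var := (F.keyArgs.filterMap Trm.var?).toFinset

def DBAtom.allVars (F : DBAtom) : Finset Var :=
  ((F.keyArgs ++ F.nonkeyArgs).filterMap Trm.var?).toFinset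

def DBAtom.notkeyVars (F : DBAtom) : Finset Var := F.allVars \ F.keyVars

def qVars (q : List DBAtom) : Finset Var := q.foldr (fun F s => F.allVars ∪ s) ∅

/-- Self-join-free: pairwise distinct relation names. -/
def SelfJoinFree (q : List DBAtom) : Prop := (q.map DBAtom.rel).Nodup

def KeyEqual (f g : DBFact) : Prop := f.rel = g.rel ∧ f.keyArgs = g.keyArgs

def DBConsistent (s : Finset DBFact) : Prop :=
  ∀ f ∈ s, ∀ g ∈ s, KeyEqual f g → f = g

/-- A repair: an inclusion-maximal consistent subset. -/
def IsRepair (db r : Finset DBFact) : Prop :=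
  r ⊆ db ∧ DBConsistent r ∧
    ∀ s : Finset DBFact, r ⊆ s → s ⊆ db → DBConsistent s → s = r

/-! ## Valuations (partial maps from variables to constants) -/

abbrev Assignment : Type := Var → Option ℚ≥0

def Assignment.Dom (θ : Assignment) : Set Var := {v | θ v ≠ none}

def Assignment.ExtendsA (μ θ : Assignment) : Prop :=
  ∀ (v : Var) (c : ℚ≥0), θ v = some c → μ v = some c

noncomputable def Assignment.restrict (θ : Assignment) (S : Set Var) : Assignment :=
  fun v => if v ∈ S then θ v else none

def emptyAssignment : Assignment := fun _ => none

/-- Combination of two valuations (the first takes precedence). -/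
def Assignment.comb (θ μ : Assignment) : Assignment :=
  fun v => (θ v).orElse (fun _ => μ v)

def applyTrm (θ : Assignment) : Trm → Trm
  | .var v => (θ v).elim (Trm.var v) Trm.const
  | .const c => .const c

def applyAtom (θ : Assignment) (F : DBAtom) : DBAtom :=
  ⟨F.rel, F.keyArgs.map (applyTrm θ), F.nonkeyArgs.map (applyTrm θ)⟩

def applyQ (θ : Assignment) (q : List DBAtom) : List DBAtom := q.map (applyAtom θ)

def DBAtom.toFact? (F : DBAtom) : Option DBFact := do
  let ks ← F.keyArgs.mapM Trm.const?
  let ns ← F.nonkeyArgs.mapM Trm.const?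
  pure (DBFact.mk F.rel ks ns)

def AtomIn (s : Finset DBFact) (F : DBAtom) : Prop := ∃ f ∈ s, F.toFact? = some f

/-- `(s, θ) ⊨ q`: θ extends to a valuation over dom(θ) ∪ vars(q) mapping all atoms of q into s. -/
def Entails (s : Finset DBFact) (θ : Assignment) (q : List DBAtom) : Prop :=
  ∃ μ : Assignment, μ.Dom = θ.Dom ∪ ↑(qVars q) ∧ μ.ExtendsA θ ∧
    ∀ F ∈ q, AtomIn s (applyAtom μ F)

/-! ## Functional dependencies -/

def FDSatT (N : Set (Var → ℚ≥0)) (X Y : Finset Var) : Prop :=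
  ∀ t₁ ∈ N, ∀ t₂ ∈ N, (∀ x ∈ X, t₁ x = t₂ x) → ∀ y ∈ Y, t₁ y = t₂ y

/-- Standard logical implication of functional dependencies. -/
def FDImp (fds : Set (Finset Var × Finset Var)) (X Y : Finset Var) : Prop :=
  ∀ N : Set (Var → ℚ≥0), (∀ fd ∈ fds, FDSatT N fd.1 fd.2) → FDSatT N X Y

def FDSet (q : List DBAtom) : Set (Finset Var × Finset Var) :=
  {p | ∃ F ∈ q, p = (F.keyVars, F.allVars)}

def keycl (F : DBAtom) (q : List DBAtom) : Set Var :=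
  {x | x ∈ qVars q ∧ FDImp (FDSet (q.erase F)) F.keyVars {x}}

/-! ## Attacks and the attack graph -/

def AdjIn (q : List DBAtom) (a b : Var) : Prop :=
  ∃ G ∈ q, a ∈ G.allVars ∧ b ∈ G.allVars

/-- Atom F attacks variable x in q. -/
def AttacksVar (q : List DBAtom) (F : DBAtom) (x : Var) : Prop :=
  ∃ l : List Var, (∀ v ∈ l, v ∉ keycl F q) ∧
    (∃ h, l.head? = some h ∧ h ∈ F.notkeyVars) ∧
    l.getLast? = some x ∧ l.Chain' (AdjIn q)

def AttacksAtom (q : List DBAtom) (F G : DBAtom) : Prop :=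
  ∃ x ∈ G.allVars, AttacksVar q F x

def Unattacked (q : List DBAtom) (v : Var) : Prop := ∀ F ∈ q, ¬ AttacksVar q F v

/-- The list order of q is a topological sort of its (hence acyclic) attack graph. -/
def IsTopoSort (q : List DBAtom) : Prop :=
  ∀ i j : Fin q.length, q.get i ≠ q.get j →
    AttacksAtom q (q.get i) (q.get j) → (i : ℕ) < (j : ℕ)

/-! ## Embeddings and ∀embeddings (relative to the list order as topological sort) -/

def uVars (q : List DBAtom) (ℓ : ℕ) : Finset Var := qVars (q.take ℓ)

def headKey : List DBAtom → Finset Var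
  | [] => ∅
  | F :: _ => F.keyVars

/-- ℓ-embedding of q in db. -/
def IsLEmb (q : List DBAtom) (db : Finset DBFact) (ℓ : ℕ) (θ : Assignment) : Prop :=
  θ.Dom = ↑(uVars q ℓ) ∧ Entails db θ q

/-- ℓ-∀embedding of q in db. -/
def IsForallEmb (q : List DBAtom) (db : Finset DBFact) : ℕ → Assignment → Prop
  | 0, θ => IsLEmb q db 0 θ ∧ ∀ r, IsRepair db r → Entails r emptyAssignment q
  | (ℓ + 1), θ =>
      IsLEmb q db (ℓ + 1) θ ∧
      (∀ r, IsRepair db r →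
        Entails r (θ.restrict (↑(uVars q ℓ) ∪ ↑(headKey (q.drop ℓ)))) (q.drop ℓ)) ∧
      IsForallEmb q db ℓ (θ.restrict ↑(uVars q ℓ))

/-- An embedding of q in s: a valuation over vars(q) mapping all atoms of q into s. -/
def IsEmbedding (q : List DBAtom) (s : Finset DBFact) (θ : Assignment) : Prop :=
  θ.Dom = ↑(qVars q) ∧ ∀ F ∈ q, AtomIn s (applyAtom θ F)

/-- Superfrugal repair: every embedding of q in r is a ∀embedding of q in db. -/
def Superfrugal (q : List DBAtom) (db r : Finset DBFact) : Prop :=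
  IsRepair db r ∧ ∀ θ, IsEmbedding q r θ → IsForallEmb q db q.length θ

/-! ## FD satisfaction by sets of valuations; maximal consistent subsets (MCS) -/

def AgreeOn (θ₁ θ₂ : Assignment) (X : Finset Var) : Prop := ∀ x ∈ X, θ₁ x = θ₂ x

def SatFD (N : Set Assignment) (X Y : Finset Var) : Prop :=
  ∀ θ₁ ∈ N, ∀ θ₂ ∈ N, AgreeOn θ₁ θ₂ X → AgreeOn θ₁ θ₂ Y

def SatFDs (N : Set Assignment) (q : List DBAtom) : Prop :=
  ∀ fd ∈ FDSet q, SatFD N fd.1 fd.2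

/-- Maximal consistent subset of a set M of embeddings. -/
def IsMCS (q : List DBAtom) (M N : Set Assignment) : Prop :=
  N ⊆ M ∧ SatFDs N q ∧ ∀ N', N ⊆ N' → N' ⊆ M → SatFDs N' q → N' = N

/-! ## Aggregate operators -/

structure AggOp : Type where
  app : Multiset ℚ≥0 → ℚ
  nonneg : ∀ X : Multiset ℚ≥0, X ≠ 0 → 0 ≤ app X

noncomputable def AggOp.appNN (A : AggOp) (X : Multiset ℚ≥0) : ℚ≥0 := (A.app X).toNNRat

def AggOp.Assoc (A : AggOp) : Prop :=
  ∀ X Y : Multiset ℚ≥0, X ≠ 0 → A.app (X + Y) = A.app (A.appNN X ::ₘ Y)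

def AggOp.Mono (A : AggOp) : Prop :=
  ∀ x x' : List ℚ≥0, x ≠ [] → List.Forall₂ (· ≤ ·) x x' →
    ∀ Y : Multiset ℚ≥0, A.app ↑x ≤ A.app (↑x' + Y)

def evalTrm (θ : Assignment) : Trm → ℚ≥0
  | .var v => (θ v).getD 0
  | .const c => c

/-- The multiset of r-values over a (finite) set of valuations. -/
noncomputable def valsOf (N : Set Assignment) (r : Trm) : Multiset ℚ≥0 :=
  if h : N.Finite then h.toFinset.val.map (fun θ => evalTrm θ r) else 0

/-- Primitive numerical term: a (numerical) variable of the query, or a constant. -/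
def PrimTerm (q : List DBAtom) (r : Trm) : Prop :=
  (∃ v, r = Trm.var v ∧ v ∈ qVars q) ∨ (∃ c, r = Trm.const c)

/-! ## Branches and ∀key-embeddings -/

/-- γ is a branch of the ℓ-∀embedding θ. -/
def IsBranch (q : List DBAtom) (db : Finset DBFact) (ℓ : ℕ) (θ γ : Assignment) : Prop :=
  γ.ExtendsA θ ∧
  (∀ v ∈ γ.Dom \ θ.Dom, Unattacked (applyQ θ (q.drop ℓ)) v) ∧
  (∃ μ, IsForallEmb q db q.length μ ∧ μ.ExtendsA γ)

/-- γ is an (ℓ+1)-∀key-embedding: a branch of θ with domain dom(θ) ∪ key(F_{ℓ+1}). -/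
def IsKeyEmb (q : List DBAtom) (db : Finset DBFact) (ℓ : ℕ) (θ γ : Assignment) : Prop :=
  IsBranch q db ℓ θ γ ∧ γ.Dom = θ.Dom ∪ ↑(headKey (q.drop ℓ))

/-- M(θ): all ∀embeddings of q in db extending θ. -/
def Mset (q : List DBAtom) (db : Finset DBFact) (θ : Assignment) : Set Assignment :=
  {μ | IsForallEmb q db q.length μ ∧ μ.ExtendsA θ}

/-! ## Weakly connected components of the attack graph -/

def UndirectedEdge (p : List DBAtom) (F G : DBAtom) : Prop :=
  F ∈ p ∧ G ∈ p ∧ (AttacksAtom p F G ∨ AttacksAtom p G F)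

/-- S is a maximal weakly connected component of the attack graph of p. -/
def IsWCC (p : List DBAtom) (S : Set DBAtom) : Prop :=
  ∃ F₀ ∈ p, S = {G | Relation.ReflTransGen (UndirectedEdge p) F₀ G}

/-! ## rifi, sequential proofs, n-minimality -/

/-- rifi(q, s, V): valuations over V extending to a valuation over vars(q) mapping q into s. -/
def rifi (q : List DBAtom) (s : Finset DBFact) (V : Finset Var) : Set Assignment :=
  {θ | θ.Dom = ↑V ∧ ∃ μ : Assignment, μ.Dom = ↑(qVars q) ∧ μ.ExtendsA θ ∧
      ∀ F ∈ q, AtomIn s (applyAtom μ F)}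

/-- A sequential proof of FD(p) ⊨ Z → w. -/
def IsSeqProof (p : List DBAtom) (Z : Finset Var) (w : Var) (l : List DBAtom) : Prop :=
  (∀ F ∈ l, F ∈ p) ∧
  (∀ i : Fin l.length, (l.get i).keyVars ⊆ Z ∪ qVars (l.take i.1)) ∧
  w ∈ Z ∪ qVars l

/-- n-minimal repair (with X = vars(q)). -/
def NMinimal (q : List DBAtom) (db r : Finset DBFact) : Prop :=
  IsRepair db r ∧
  ¬ ∃ s : Finset DBFact, IsRepair db s ∧
      (∀ θ, IsEmbedding q s θ → IsEmbedding q r θ) ∧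
      (∃ μ, IsEmbedding q r μ ∧ ¬ IsEmbedding q s μ)

/-! ## Descending chains for aggregate operators -/

def DescChain {α β : Type*} [LT β] (F : Multiset α → β) (s t : α) : Prop :=
  ∀ i : ℕ, F (s ::ₘ Multiset.replicate (i + 1) t) < F (s ::ₘ Multiset.replicate i t)

def BoundedBy {α β : Type*} [LT β] (F : Multiset α → β) (s t : α) (m : ℕ → α) : Prop :=
  ∀ i j : ℕ, 1 ≤ j → ∀ k' k : ℕ, k' ≤ k → k ≤ i →
    F (s ::ₘ Multiset.replicate k' t) <
      F (Multiset.replicate j (m i) + (s ::ₘ Multiset.replicate k t))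

def HasBoundedDescChain {α β : Type*} [LT β] (F : Multiset α → β) : Prop :=
  ∃ s t, DescChain F s t ∧ ∃ m : ℕ → α, BoundedBy F s t m


/-! A valuation only removes variables: adjacency in `θ(q)` is adjacency in `q` between variables
outside `dom(θ)`, and the closure of `key(F)` under `FD(q ∖ {F})` can only grow. It grows at a
variable `z` attacked by `F` only if some derivation step uses a key variable of an atom `G` that
was not in the original closure; that key variable is adjacent to `z` in `G`, hence also attacked
by `F`, hence outside `dom(θ)`, and induction on the derivation rules this out. So along an attack
path, which never meets `dom(θ)`, the two key closures agree. -/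

section Valuation

variable (θ : Assignment)

theorem var?_applyTrm (s : Trm) :
    (applyTrm θ s).var? = s.var?.filter (fun v => θ v = none) := by
  cases s with
  | var w => cases h : θ w <;> simp [applyTrm, Trm.var?, Option.filter, h]
  | const c => rfl

theorem mem_filterMap_var?_map_applyTrm {l : List Trm} {v : Var} :
    v ∈ (l.map (applyTrm θ)).filterMap Trm.var? ↔ v ∈ l.filterMap Trm.var? ∧ θ v = none := by
  simp only [List.filterMap_map, List.mem_filterMap, Function.comp_apply, var?_applyTrm,
    Option.filter_eq_some_iff, decide_eq_true_eq, ← and_assoc, exists_and_right]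

theorem mem_keyVars_applyAtom {F : DBAtom} {v : Var} :
    v ∈ (applyAtom θ F).keyVars ↔ v ∈ F.keyVars ∧ θ v = none := by
  simp only [DBAtom.keyVars, applyAtom, List.mem_toFinset, mem_filterMap_var?_map_applyTrm]

theorem mem_allVars_applyAtom {F : DBAtom} {v : Var} :
    v ∈ (applyAtom θ F).allVars ↔ v ∈ F.allVars ∧ θ v = none := by
  simp only [DBAtom.allVars, applyAtom, List.mem_toFinset, ← List.map_append,
    mem_filterMap_var?_map_applyTrm]

theorem mem_notkeyVars_applyAtom {F : DBAtom} {v : Var} :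
    v ∈ (applyAtom θ F).notkeyVars ↔ v ∈ F.notkeyVars ∧ θ v = none := by
  simp only [DBAtom.notkeyVars, Finset.mem_sdiff, mem_allVars_applyAtom, mem_keyVars_applyAtom]
  tauto

theorem applyAtom_mem_applyQ {q : List DBAtom} {F : DBAtom} (hF : F ∈ q) :
    applyAtom θ F ∈ applyQ θ q :=
  List.mem_map_of_mem hF

theorem adjIn_applyQ_iff {q : List DBAtom} {x y : Var} :
    AdjIn (applyQ θ q) x y ↔ AdjIn q x y ∧ θ x = none ∧ θ y = none := by
  constructor
  · rintro ⟨_, hG', hx, hy⟩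
    obtain ⟨G, hG, rfl⟩ := List.mem_map.1 hG'
    rw [mem_allVars_applyAtom] at hx hy
    exact ⟨⟨G, hG, hx.1, hy.1⟩, hx.2, hy.2⟩
  · rintro ⟨⟨G, hG, hx, hy⟩, hθx, hθy⟩
    exact ⟨_, applyAtom_mem_applyQ θ hG, (mem_allVars_applyAtom θ).2 ⟨hx, hθx⟩,
      (mem_allVars_applyAtom θ).2 ⟨hy, hθy⟩⟩

theorem applyQ_erase {q : List DBAtom} (hsjf : SelfJoinFree q) {F : DBAtom} (hF : F ∈ q) :
    (applyQ θ q).erase (applyAtom θ F) = applyQ θ (q.erase F) := by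
  have hinj : ∀ G ∈ q, applyAtom θ G = applyAtom θ F → G = F := fun G hG h =>
    List.inj_on_of_nodup_map hsjf hG hF (congrArg DBAtom.rel h :)
  have hnodup : (applyQ θ q).Nodup := by
    refine List.Nodup.of_map DBAtom.rel ?_
    simpa [SelfJoinFree, applyQ, Function.comp_def, applyAtom] using hsjf
  rw [hnodup.erase_eq_filter, (hsjf.of_map DBAtom.rel).erase_eq_filter, applyQ, applyQ,
    List.filter_map]
  congr 1
  refine List.filter_congr fun G hG => ?_
  rw [Function.comp_apply, Bool.eq_iff_iff, bne_iff_ne, bne_iff_ne]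
  exact not_congr ⟨hinj G hG, congrArg _⟩

end Valuation

theorem keyVars_subset_allVars (F : DBAtom) : F.keyVars ⊆ F.allVars := by
  intro v
  simp only [DBAtom.keyVars, DBAtom.allVars, List.mem_toFinset, List.filterMap_append,
    List.mem_append]
  exact Or.inl

theorem mem_qVars {q : List DBAtom} {v : Var} : v ∈ qVars q ↔ ∃ G ∈ q, v ∈ G.allVars := by
  induction q with
  | nil => simp [qVars]
  | cons G q ih => simp [qVars, ← ih]

inductive InFDClosure (p : List DBAtom) (X : Finset Var) : Var → Prop
  | base {v : Var} : v ∈ X → InFDClosure p X v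
  | step {v : Var} (G : DBAtom) : G ∈ p → (∀ k ∈ G.keyVars, InFDClosure p X k) →
      v ∈ G.allVars → InFDClosure p X v

theorem fdImp_singleton_iff {p : List DBAtom} {X : Finset Var} {x : Var} :
    FDImp (FDSet p) X {x} ↔ InFDClosure p X x := by
  constructor
  · intro h
    -- the two-row relation whose rows agree exactly on the closure satisfies `FD(p)`
    let t : Var → ℚ≥0 := fun z => if InFDClosure p X z then 0 else 1
    have ht : ∀ z, (0 : Var → ℚ≥0) z = t z ↔ InFDClosure p X z := fun z => by
      by_cases hz : InFDClosure p X z <;> simp [t, hz]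
    have hsat : ∀ fd ∈ FDSet p, FDSatT {0, t} fd.1 fd.2 := by
      rintro _ ⟨G, hG, rfl⟩ s₁ (rfl | rfl) s₂ (rfl | rfl) hkey y hy
      · rfl
      · exact (ht y).2 (.step G hG (fun k hk => (ht k).1 (hkey k hk)) hy)
      · exact ((ht y).2 (.step G hG (fun k hk => (ht k).1 (hkey k hk).symm) hy)).symm
      · rfl
    exact (ht x).1 (h _ hsat 0 (by simp) t (by simp) (fun z hz => (ht z).2 (.base hz)) x
      (Finset.mem_singleton_self x))
  · intro h N hN s₁ h₁ s₂ h₂ hX y hy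
    rw [Finset.mem_singleton.1 hy]
    clear hy
    induction h with
    | base hv => exact hX _ hv
    | step G hG _ hv ih => exact hN _ ⟨G, hG, rfl⟩ s₁ h₁ s₂ h₂ ih _ hv

theorem mem_keycl_iff {q : List DBAtom} {F : DBAtom} (hF : F ∈ q) {x : Var} :
    x ∈ keycl F q ↔ InFDClosure (q.erase F) F.keyVars x := by
  refine ⟨fun h => fdImp_singleton_iff.1 h.2, fun h => ⟨?_, fdImp_singleton_iff.2 h⟩⟩
  induction h with
  | base hv => exact mem_qVars.2 ⟨F, hF, keyVars_subset_allVars F hv⟩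
  | step G hG _ hv => exact mem_qVars.2 ⟨G, List.mem_of_mem_erase hG, hv⟩

theorem InFDClosure.applyQ (θ : Assignment) {p : List DBAtom} {X Y : Finset Var} {x : Var}
    (hXY : ∀ k ∈ X, θ k = none → k ∈ Y) (h : InFDClosure p X x) (hx : θ x = none) :
    InFDClosure (applyQ θ p) Y x := by
  induction h with
  | base hv => exact .base (hXY _ hv hx)
  | step G hG _ hv ih =>
    refine .step (applyAtom θ G) (applyAtom_mem_applyQ θ hG) (fun k hk => ?_)
      ((mem_allVars_applyAtom θ).2 ⟨hv, hx⟩)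
    obtain ⟨hk, hθk⟩ := (mem_keyVars_applyAtom θ).1 hk
    exact ih k hk hθk

theorem mem_keycl_applyQ (θ : Assignment) {q : List DBAtom} (hsjf : SelfJoinFree q)
    {F : DBAtom} (hF : F ∈ q) {x : Var} (hx : x ∈ keycl F q) (hθ : θ x = none) :
    x ∈ keycl (applyAtom θ F) (applyQ θ q) := by
  rw [mem_keycl_iff (applyAtom_mem_applyQ θ hF), applyQ_erase θ hsjf hF]
  exact ((mem_keycl_iff hF).1 hx).applyQ θ
    (fun k hk hθk => (mem_keyVars_applyAtom θ).2 ⟨hk, hθk⟩) hθ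

section Attacks

variable {p : List DBAtom} {F : DBAtom}

theorem AttacksVar.notMem_keycl {x : Var} (h : AttacksVar p F x) : x ∉ keycl F p :=
  let ⟨_, hcl, _, hlast, _⟩ := h
  hcl x (List.mem_of_getLast? hlast)

theorem AttacksVar.of_mem_notkeyVars {x : Var} (hx : x ∈ F.notkeyVars) (hcl : x ∉ keycl F p) :
    AttacksVar p F x :=
  ⟨[x], by simpa using hcl, ⟨x, rfl, hx⟩, rfl, List.isChain_singleton x⟩

theorem AttacksVar.of_adjIn {x y : Var} (hx : AttacksVar p F x) (hxy : AdjIn p x y)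
    (hy : y ∉ keycl F p) : AttacksVar p F y := by
  obtain ⟨l, hcl, ⟨h, hh, hhF⟩, hlast, hch⟩ := hx
  refine ⟨l ++ [y], ?_, ⟨h, ?_, hhF⟩, List.getLast?_concat, ?_⟩
  · simpa [or_imp, forall_and] using And.intro hcl hy
  · rw [List.head?_append, hh, Option.some_or]
  · refine List.isChain_append.2 ⟨hch, List.isChain_singleton y, fun a ha b hb => ?_⟩
    simp_all

theorem AttacksVar.induction {P : Var → Prop}
    (base : ∀ h ∈ F.notkeyVars, h ∉ keycl F p → P h)
    (step : ∀ x y, AttacksVar p F x → P x → AdjIn p x y → y ∉ keycl F p → P y)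
    {x : Var} (hx : AttacksVar p F x) : P x := by
  obtain ⟨l, hcl, ⟨h, hh, hhF⟩, hlast, hch⟩ := hx
  have hch' : l.IsChain (fun a b => AdjIn p a b ∧ b ∉ keycl F p) :=
    List.IsChain.imp_of_mem_imp (fun _ b _ hb hab => ⟨hab, hcl b hb⟩) hch
  refine (hch'.induction (fun y => AttacksVar p F y ∧ P y) l ?_ ?_ x
    (List.mem_of_getLast? hlast)).2
  · rintro y z ⟨hyz, hz⟩ ⟨hy, hPy⟩
    exact ⟨hy.of_adjIn hyz hz, step y z hy hPy hyz hz⟩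
  · intro hl
    obtain rfl : l.head hl = h := Option.some.inj ((List.head?_eq_some_head hl).symm.trans hh)
    have hcl_h := hcl _ (List.head_mem hl)
    exact ⟨.of_mem_notkeyVars hhF hcl_h, base _ hhF hcl_h⟩

end Attacks

theorem notMem_keycl_applyQ_of_attacksVar (θ : Assignment) {q : List DBAtom}
    (hsjf : SelfJoinFree q) {F : DBAtom} (hF : F ∈ q)
    (hfree : ∀ y, AttacksVar q F y → θ y = none) {z : Var} (hz : AttacksVar q F z) :
    z ∉ keycl (applyAtom θ F) (applyQ θ q) := by
  rw [mem_keycl_iff (applyAtom_mem_applyQ θ hF), applyQ_erase θ hsjf hF]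
  intro hcl
  refine hz.notMem_keycl ((mem_keycl_iff hF).2 ?_)
  induction hcl with
  | base hv => exact .base ((mem_keyVars_applyAtom θ).1 hv).1
  | step G' hG' _ hv ih =>
    obtain ⟨G, hG, rfl⟩ := List.mem_map.1 hG'
    have hzG := ((mem_allVars_applyAtom θ).1 hv).1
    refine .step G hG (fun k hk => ?_) hzG
    by_contra hkcl
    have hk_att : AttacksVar q F k :=
      hz.of_adjIn ⟨G, List.mem_of_mem_erase hG, hzG, keyVars_subset_allVars G hk⟩
        fun h => hkcl ((mem_keycl_iff hF).1 h)
    exact hkcl (ih k ((mem_keyVars_applyAtom θ).2 ⟨hk, hfree k hk_att⟩) hk_att)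

theorem stmt5_general
    (q : List DBAtom) (hsjf : SelfJoinFree q)
    (θ : Assignment)
    (F : DBAtom) (hF : F ∈ q)
    (hnoatt : ∀ v ∈ θ.Dom, ¬ AttacksVar q F v) :
    ∀ v ∈ qVars q, v ∉ θ.Dom →
      (AttacksVar q F v ↔ AttacksVar (applyQ θ q) (applyAtom θ F) v) := by
  have hfree : ∀ y, AttacksVar q F y → θ y = none := fun y hy =>
    not_not.1 fun hθ => hnoatt y hθ hy
  intro v _ _
  constructor
  · refine AttacksVar.induction (fun h hh hcl => ?_) (fun x y hx ih hxy hy => ?_)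
    · have hatt := AttacksVar.of_mem_notkeyVars hh hcl
      exact .of_mem_notkeyVars ((mem_notkeyVars_applyAtom θ).2 ⟨hh, hfree h hatt⟩)
        (notMem_keycl_applyQ_of_attacksVar θ hsjf hF hfree hatt)
    · have hatt := hx.of_adjIn hxy hy
      exact ih.of_adjIn ((adjIn_applyQ_iff θ).2 ⟨hxy, hfree x hx, hfree y hatt⟩)
        (notMem_keycl_applyQ_of_attacksVar θ hsjf hF hfree hatt)
  · refine AttacksVar.induction (fun h hh hcl => ?_) (fun x y _ ih hxy hy => ?_)
    · obtain ⟨hh, hθ⟩ := (mem_notkeyVars_applyAtom θ).1 hh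
      exact .of_mem_notkeyVars hh fun hk => hcl (mem_keycl_applyQ θ hsjf hF hk hθ)
    · obtain ⟨hxy, -, hθ⟩ := (adjIn_applyQ_iff θ).1 hxy
      exact ih.of_adjIn hxy fun hk => hy (mem_keycl_applyQ θ hsjf hF hk hθ)

/-- If F attacks no variable of dom(θ), then for variables outside dom(θ),
attacks are preserved and reflected under the partial valuation θ. -/
theorem stmt5
    (q : List DBAtom) (hsjf : SelfJoinFree q)
    (θ : Assignment) (hdom : θ.Dom ⊆ ↑(qVars q))
    (F : DBAtom) (hF : F ∈ q)
    (hnoatt : ∀ v ∈ θ.Dom, ¬ AttacksVar q F v) :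
    ∀ v ∈ qVars q, v ∉ θ.Dom →
      (AttacksVar q F v ↔ AttacksVar (applyQ θ q) (applyAtom θ F) v) :=
  stmt5_general q hsjf θ F hF hnoatt
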